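/- Let A be a two-dimensional non-degenerate evolution algebra over an algebraically closed field F whose standard decomposition consists of two one-dimensional subspaces with A_1 ≅ A_2 ≅ O_1 (i.e. A has a natural basis {e_1, e_2} with e_1² = a_{21}e_2, e_2² = a_{12}e_1 where a_{12}a_{21} ≠ 0, and no diagonal components). Then A is isomorphic to the algebra with e_1² = e_2, e_2² = e_1, e_1e_2 = 0. -/

import Mathlib

/-!
Rescaling the basis, `e₁ ↦ c e₁`, `e₂ ↦ d e₂`, preserves the shape of the structure matrix and
turns `(a₁₂, a₂₁)` into `(c a₁₂ / d², d a₂₁ / c²)`. So it suffices to solve `c a₁₂ = d²`,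
`d a₂₁ = c²` with `c d ≠ 0`: take `c` a cube root of `a₁₂ a₂₁²` and `d = c² / a₂₁`.
-/

/-- The two-dimensional evolution algebra with structure matrix `[[0, a₁₂],[a₂₁, 0]]`:
`e₁² = a₂₁·e₂`, `e₂² = a₁₂·e₁`, `e₁e₂ = 0`. -/
def evMul2 {F : Type*} [Field F] (a12 a21 : F) (x y : Fin 2 → F) : Fin 2 → F :=
  ![a12 * (x 1 * y 1), a21 * (x 0 * y 0)]

section Rescaling

variable {F : Type*} [Field F]

def basisRescaling (u : Fin 2 → Fˣ) : (Fin 2 → F) ≃ₗ[F] (Fin 2 → F) :=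
  LinearEquiv.piCongrRight fun i => LinearEquiv.smulOfUnit (u i)

theorem basisRescaling_apply (u : Fin 2 → Fˣ) (x : Fin 2 → F) (i : Fin 2) :
    basisRescaling u x i = u i * x i :=
  rfl

theorem basisRescaling_evMul2 {a12 a21 b12 b21 : F} {u : Fin 2 → Fˣ}
    (h12 : u 0 * a12 = b12 * u 1 ^ 2) (h21 : u 1 * a21 = b21 * u 0 ^ 2) (x y : Fin 2 → F) :
    basisRescaling u (evMul2 a12 a21 x y) =
      evMul2 b12 b21 (basisRescaling u x) (basisRescaling u y) := by
  funext i
  fin_cases i <;>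
    simp only [evMul2, basisRescaling_apply, Fin.zero_eta, Fin.mk_one, Matrix.cons_val_zero,
      Matrix.cons_val_one, Matrix.cons_val_fin_one]
  · linear_combination (x 1 * y 1) * h12
  · linear_combination (x 0 * y 0) * h21

end Rescaling

theorem exists_units_mul_eq_sq_of_isAlgClosed {F : Type*} [Field F] [IsAlgClosed F]
    {a12 a21 : F} (ha12 : a12 ≠ 0) (ha21 : a21 ≠ 0) :
    ∃ c d : Fˣ, c * a12 = d ^ 2 ∧ d * a21 = c ^ 2 := by
  obtain ⟨c, hc⟩ := IsAlgClosed.exists_pow_nat_eq (a12 * a21 ^ 2) three_pos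
  have hc0 : c ≠ 0 := by
    rintro rfl
    simp_all
  refine ⟨Units.mk0 c hc0, Units.mk0 (c ^ 2 / a21) (by positivity), ?_, ?_⟩
  · simp only [Units.val_mk0]
    field_simp
    linear_combination -hc
  · simp only [Units.val_mk0]
    field_simp

/-- **Classification in the case `Δ(A) = (O₁, O₁)`.** Over an algebraically closed
field, a two-dimensional non-degenerate evolution algebra with structure matrix
`[[0, a₁₂],[a₂₁, 0]]`, `a₁₂a₂₁ ≠ 0`, is isomorphic to the algebra
`e₁² = e₂`, `e₂² = e₁`, `e₁e₂ = 0`. -/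
theorem stmt_17 (F : Type*) [Field F] [IsAlgClosed F] (a12 a21 : F)
    (h : a12 * a21 ≠ 0) :
    ∃ φ : (Fin 2 → F) ≃ₗ[F] (Fin 2 → F),
      ∀ x y, φ (evMul2 a12 a21 x y) = evMul2 1 1 (φ x) (φ y) := by
  obtain ⟨ha12, ha21⟩ := mul_ne_zero_iff.mp h
  obtain ⟨c, d, hc, hd⟩ := exists_units_mul_eq_sq_of_isAlgClosed ha12 ha21
  exact ⟨basisRescaling ![c, d], basisRescaling_evMul2 (by simpa using hc) (by simpa using hd)⟩
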